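/- Let (C, J) be a small site and let P be a flat presheaf of abelian groups on C (the objectwise tensor product P ⊗ − preserves monomorphisms of presheaves; equivalently P is torsion-free). Then the sheafification sP of P is a flat sheaf: for every monomorphism of abelian sheaves G → H, the induced morphism sP ⊗ G → sP ⊗ H of sheaves is a monomorphism, where the tensor product of abelian sheaves is the sheafification of the objectwise tensor product of underlying presheaves. -/

import Mathlib

/-!
Over `ℤ` flatness is torsion-freeness, and this holds objectwise for presheaves too: tensoring
the mono `n • 𝟙` of the constant presheaf `ℤ` with a flat `P` shows that `n • 𝟙 P` is a mono,
and conversely torsion-free abelian groups are flat. Torsion-freeness of a presheaf says that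
`n • 𝟙` is a mono for `n ≠ 0`, a property that sheafification keeps, being additive and left
exact. So `sP ⊗ −` preserves monos of presheaves, and sheafifying the mono `sP ⊗ G ⟶ sP ⊗ H`
of presheaves gives the claim.
-/

open CategoryTheory Limits Opposite

universe u

variable {C : Type u} [SmallCategory C]
/-- The objectwise tensor product (over `ℤ`) of two presheaves of abelian groups. -/
noncomputable def presheafTensorObj (P Q : Cᵒᵖ ⥤ AddCommGrpCat.{u}) : Cᵒᵖ ⥤ AddCommGrpCat.{u} where
  obj U := AddCommGrpCat.of (TensorProduct ℤ (P.obj U) (Q.obj U))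
  map f := AddCommGrpCat.ofHom
    (TensorProduct.map (P.map f).hom.toIntLinearMap (Q.map f).hom.toIntLinearMap).toAddMonoidHom
  map_id U := by
    ext x
    refine TensorProduct.induction_on x (by simp) (fun a b => by simp)
      (fun a b ha hb => by simp only [map_add, ha, hb])
  map_comp f g := by
    ext x
    refine TensorProduct.induction_on x (by simp) (fun a b => ?_)
      (fun a b ha hb => by simp only [map_add, ha, hb])
    show (P.map (f ≫ g)) a ⊗ₜ[ℤ] (Q.map (f ≫ g)) b
        = (P.map g) ((P.map f) a) ⊗ₜ[ℤ] (Q.map g) ((Q.map f) b)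
    simp

/-- The morphism of presheaves `P ⊗ Q ⟶ P ⊗ R` induced by `f : Q ⟶ R`. -/
noncomputable def presheafTensorMap (P : Cᵒᵖ ⥤ AddCommGrpCat.{u}) {Q R : Cᵒᵖ ⥤ AddCommGrpCat.{u}}
    (f : Q ⟶ R) : presheafTensorObj P Q ⟶ presheafTensorObj P R where
  app U := AddCommGrpCat.ofHom
    (TensorProduct.map (AddMonoidHom.id _).toIntLinearMap (f.app U).hom.toIntLinearMap).toAddMonoidHom
  naturality U V g := by
    ext x
    refine TensorProduct.induction_on x (by rfl) (fun a b => ?_)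
      (fun a b ha hb => (map_add _ a b).trans ((congrArg₂ (· + ·) ha hb).trans (map_add _ a b).symm))
    show (P.map g) a ⊗ₜ[ℤ] (f.app V) ((Q.map g) b)
        = (P.map g) a ⊗ₜ[ℤ] (R.map g) ((f.app U) b)
    exact congrArg₂ (· ⊗ₜ[ℤ] ·) rfl (CategoryTheory.congr_fun (f.naturality g) b)

variable (J : GrothendieckTopology C)

variable (J : GrothendieckTopology C)

/-- The tensor product of two abelian sheaves: the sheafification of the objectwise
tensor product of the underlying presheaves. -/
noncomputable def sheafTensorObj (F G : Sheaf J AddCommGrpCat.{u}) : Sheaf J AddCommGrpCat.{u} :=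
  (presheafToSheaf J AddCommGrpCat.{u}).obj (presheafTensorObj F.val G.val)

/-- The morphism of abelian sheaves `F ⊗ G ⟶ F ⊗ H` induced by `f : G ⟶ H`. -/
noncomputable def sheafTensorMap (F : Sheaf J AddCommGrpCat.{u}) {G H : Sheaf J AddCommGrpCat.{u}}
    (f : G ⟶ H) : sheafTensorObj J F G ⟶ sheafTensorObj J F H :=
  (presheafToSheaf J AddCommGrpCat.{u}).map (presheafTensorMap F.val f.hom)

/-- A presheaf of abelian groups is flat if the functor `P ⊗ −` preserves monomorphisms
of presheaves. -/
def PresheafFlat (P : Cᵒᵖ ⥤ AddCommGrpCat.{u}) : Prop :=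
  ∀ ⦃Q R : Cᵒᵖ ⥤ AddCommGrpCat.{u}⦄ (f : Q ⟶ R), Mono f → Mono (presheafTensorMap P f)

lemma AddCommGrpCat.isAddTorsionFree_iff_mono_nsmul_id (A : AddCommGrpCat.{u}) :
    IsAddTorsionFree A ↔ ∀ n : ℕ, n ≠ 0 → Mono (n • 𝟙 A) := by
  simp only [isAddTorsionFree_iff, AddCommGrpCat.mono_iff_injective]
  rfl

namespace CategoryTheory.Functor

lemma isAddTorsionFree_obj_iff_mono_nsmul_id {K : Type*} [Category K]
    (P : K ⥤ AddCommGrpCat.{u}) :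
    (∀ U, IsAddTorsionFree (P.obj U)) ↔ ∀ n : ℕ, n ≠ 0 → Mono (n • 𝟙 P) := by
  simp only [AddCommGrpCat.isAddTorsionFree_iff_mono_nsmul_id, NatTrans.mono_iff_mono_app,
    NatTrans.app_nsmul, NatTrans.id_app]
  exact ⟨fun h n hn U ↦ h U n hn, fun h U n hn ↦ h n hn U⟩

lemma isAddTorsionFree_obj_map {K L : Type*} [Category K] [Category L]
    (F : (K ⥤ AddCommGrpCat.{u}) ⥤ (L ⥤ AddCommGrpCat.{u})) [F.Additive]
    [F.PreservesMonomorphisms] {P : K ⥤ AddCommGrpCat.{u}} (hP : ∀ U, IsAddTorsionFree (P.obj U))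
    (V : L) : IsAddTorsionFree ((F.obj P).obj V) := by
  revert V
  rw [isAddTorsionFree_obj_iff_mono_nsmul_id] at hP ⊢
  intro n hn
  have := hP n hn
  rw [← F.map_id, ← F.map_nsmul]
  infer_instance

end CategoryTheory.Functor

lemma presheafTensorMap_nsmul_id (P Q : Cᵒᵖ ⥤ AddCommGrpCat.{u}) (n : ℕ) :
    presheafTensorMap P (n • 𝟙 Q) = n • 𝟙 (presheafTensorObj P Q) := by
  ext U x
  induction x using TensorProduct.induction_on with
  | zero => exact (map_zero _).trans (map_zero _).symm
  | tmul a b => exact TensorProduct.tmul_smul n a b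
  | add x y hx hy =>
    exact (map_add _ x y).trans ((congrArg₂ (· + ·) hx hy).trans (map_add _ x y).symm)

lemma PresheafFlat.isAddTorsionFree_tensorObj {P : Cᵒᵖ ⥤ AddCommGrpCat.{u}} (hP : PresheafFlat P)
    {Q : Cᵒᵖ ⥤ AddCommGrpCat.{u}} (hQ : ∀ U, IsAddTorsionFree (Q.obj U)) (U : Cᵒᵖ) :
    IsAddTorsionFree ((presheafTensorObj P Q).obj U) := by
  revert U
  rw [Functor.isAddTorsionFree_obj_iff_mono_nsmul_id] at hQ ⊢
  intro n hn
  rw [← presheafTensorMap_nsmul_id]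
  exact hP _ (hQ n hn)

lemma PresheafFlat.isAddTorsionFree_obj {P : Cᵒᵖ ⥤ AddCommGrpCat.{u}} (hP : PresheafFlat P)
    (U : Cᵒᵖ) : IsAddTorsionFree (P.obj U) := by
  let Z : Cᵒᵖ ⥤ AddCommGrpCat.{u} := (Functor.const Cᵒᵖ).obj (.of (ULift.{u} ℤ))
  have hZ (V : Cᵒᵖ) : IsAddTorsionFree (Z.obj V) :=
    let e : ULift.{u} ℤ ≃+ ℤ := AddEquiv.ulift
    Function.Injective.isAddTorsionFree e.toAddMonoidHom e.injective
  have : IsAddTorsionFree (TensorProduct ℤ (P.obj U) (ULift.{u} ℤ)) :=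
    hP.isAddTorsionFree_tensorObj hZ U
  let e : P.obj U ≃ₗ[ℤ] TensorProduct ℤ (P.obj U) (ULift.{u} ℤ) :=
    (TensorProduct.rid ℤ _).symm.trans (ULift.moduleEquiv.symm.lTensor _)
  exact Function.Injective.isAddTorsionFree e.toAddMonoidHom e.injective

lemma presheafFlat_of_isAddTorsionFree_obj {P : Cᵒᵖ ⥤ AddCommGrpCat.{u}}
    (hP : ∀ U, IsAddTorsionFree (P.obj U)) : PresheafFlat P := by
  intro Q R f hf
  rw [NatTrans.mono_iff_mono_app] at hf ⊢
  intro U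
  have : Module.Flat ℤ (P.obj U) := inferInstance
  have hfU := (AddCommGrpCat.mono_iff_injective _).1 (hf U)
  rw [AddCommGrpCat.mono_iff_injective]
  exact Module.Flat.lTensor_preserves_injective_linearMap (f.app U).hom.toIntLinearMap hfU

theorem presheafFlat_iff_isAddTorsionFree_obj (P : Cᵒᵖ ⥤ AddCommGrpCat.{u}) :
    PresheafFlat P ↔ ∀ U, IsAddTorsionFree (P.obj U) :=
  ⟨PresheafFlat.isAddTorsionFree_obj, presheafFlat_of_isAddTorsionFree_obj⟩

theorem sheafification_of_flat_is_flat (P : Cᵒᵖ ⥤ AddCommGrpCat.{u}) (hP : PresheafFlat P)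
    ⦃G H : Sheaf J AddCommGrpCat.{u}⦄ (f : G ⟶ H) (hf : Mono f) :
    Mono (sheafTensorMap J ((presheafToSheaf J AddCommGrpCat.{u}).obj P) f) := by
  have hsP : PresheafFlat ((presheafToSheaf J AddCommGrpCat.{u}).obj P).obj := by
    rw [presheafFlat_iff_isAddTorsionFree_obj] at hP ⊢
    exact Functor.isAddTorsionFree_obj_map
      (presheafToSheaf J AddCommGrpCat.{u} ⋙ sheafToPresheaf J AddCommGrpCat.{u}) hP
  have : Mono f.hom := (sheafToPresheaf J AddCommGrpCat.{u}).map_mono f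
  have := hsP f.hom this
  exact (presheafToSheaf J AddCommGrpCat.{u}).map_mono _
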